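/- Let (f₀, f₁, f₂) ∈ ℝ³ and ε > 0, and let (ω₀, ω₁) be the WENO3-Z nonlinear weights of (f₀, f₁, f₂). Then the WENO3-Z nonlinear weights of the flipped stencil (f₂, f₁, f₀) equal (ω₁/(4ω₀ + ω₁), 4ω₀/(4ω₀ + ω₁)). -/
import Mathlib


/-- WENO3-Z nonlinear weights of the three-point stencil `(f₀, f₁, f₂)`
with regularization parameter `ε`. -/
noncomputable def zWeights (ε f0 f1 f2 : ℝ) : ℝ × ℝ :=
  let β0 := (f0 - f1) ^ 2
  let β1 := (f1 - f2) ^ 2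
  let τ := |β0 - β1|
  let α0 := (1 / 3) * (1 + (τ / (β0 + ε)) ^ 2)
  let α1 := (2 / 3) * (1 + (τ / (β1 + ε)) ^ 2)
  (α0 / (α0 + α1), α1 / (α0 + α1))

theorem zWeights_flip_symmetry (f0 f1 f2 ε : ℝ) (hε : 0 < ε) :
    zWeights ε f2 f1 f0 =
      ((zWeights ε f0 f1 f2).2 / (4 * (zWeights ε f0 f1 f2).1 + (zWeights ε f0 f1 f2).2),
       4 * (zWeights ε f0 f1 f2).1 / (4 * (zWeights ε f0 f1 f2).1 + (zWeights ε f0 f1 f2).2)) := by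
  have h1 : (f2 - f1) ^ 2 = (f1 - f2) ^ 2 := by ring
  have h2 : (f1 - f0) ^ 2 = (f0 - f1) ^ 2 := by ring
  simp only [zWeights, h1, h2, abs_sub_comm ((f1 - f2) ^ 2)]
  set τ := |(f0 - f1) ^ 2 - (f1 - f2) ^ 2| with hτ
  set a := 1 + (τ / ((f0 - f1) ^ 2 + ε)) ^ 2 with ha
  set b := 1 + (τ / ((f1 - f2) ^ 2 + ε)) ^ 2 with hb
  have hapos : 0 < a := by positivity
  have hbpos : 0 < b := by positivity
  have hS : (1 / 3 : ℝ) * a + 2 / 3 * b ≠ 0 := by positivity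
  have hS' : (1 / 3 : ℝ) * b + 2 / 3 * a ≠ 0 := by positivity
  have key : 4 * ((1 / 3 : ℝ) * a / (1 / 3 * a + 2 / 3 * b)) +
      2 / 3 * b / (1 / 3 * a + 2 / 3 * b) =
      (4 * (1 / 3 * a) + 2 / 3 * b) / (1 / 3 * a + 2 / 3 * b) := by
    field_simp
  have hnum : (4 * ((1 / 3 : ℝ) * a) + 2 / 3 * b) ≠ 0 := by positivity
  refine Prod.ext ?_ ?_ <;> simp only [key] <;> (field_simp; ring)
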